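/- arXiv:2004.03923 — 8 statements merged into one kernel-verified Lean document; each statement's English description precedes it below -/
import Mathlib

section
/- Let Q be an n×n real symmetric positive semidefinite matrix of rank k, let M be the positive semidefinite square root of Q, let C be an m×n real matrix with rank C = m, let C⁺ be the Moore–Penrose pseudoinverse of C, let N = I − C⁺C, and let (MN)⁺ be the Moore–Penrose pseudoinverse of MN. Then the image of the set {x ∈ ℝⁿ | xᵀQx ≤ 1} under the linear map x ↦ Cx equals {y ∈ ℝᵐ | yᵀRy ≤ 1}, where R = C⁺ᵀ M (I − (MN)(MN)⁺) M C⁺. -/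
open Matrix

/-- `Ap` is the Moore–Penrose pseudoinverse of `A`. -/
def IsMoorePenrose {m n : ℕ} (A : Matrix (Fin m) (Fin n) ℝ)
    (Ap : Matrix (Fin n) (Fin m) ℝ) : Prop :=
  A * Ap * A = A ∧ Ap * A * Ap = Ap ∧ (A * Ap)ᵀ = A * Ap ∧ (Ap * A)ᵀ = Ap * A

/-!
Write `S = 1 - (MN)(MN)⁺`, the orthogonal projection onto the orthogonal complement of the
column space of `MN`, so that `R = (S M C⁺)ᵀ (S M C⁺)` and `xᵀQx = |Mx|²`. Since `S M N = 0` and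
`C⁺C = 1 - N`, for every `x` we get `S M C⁺ (Cx) = S M x`, whence `(Cx)ᵀR(Cx) = |S M x|² ≤ |Mx|²`.
Conversely, `C` has full row rank, so `C C⁺ = 1`; the point `x = (C⁺ - N (MN)⁺ M C⁺) y` then
satisfies `Cx = y` and `Mx = S M C⁺ y`, hence `xᵀQx = yᵀRy`.
-/

namespace Matrix

variable {R ι κ : Type*} [Fintype ι]

theorem dotProduct_mulVec_transpose_mul_self [Fintype κ] [CommSemiring R] (A : Matrix κ ι R)
    (v : ι → R) : v ⬝ᵥ (Aᵀ * A) *ᵥ v = A *ᵥ v ⬝ᵥ A *ᵥ v := by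
  rw [← mulVec_mulVec, dotProduct_mulVec, vecMul_transpose]

section Projection

variable {S : Matrix ι ι R}

theorem IsSymm.transpose_mul_mul_self_of_isIdempotentElem [CommSemiring R] (hS : S.IsSymm)
    (hS' : IsIdempotentElem S) (A : Matrix ι κ R) : (S * A)ᵀ * (S * A) = Aᵀ * S * A := by
  rw [transpose_mul, hS.eq, Matrix.mul_assoc, ← Matrix.mul_assoc S, hS'.eq, Matrix.mul_assoc]

theorem IsSymm.dotProduct_mulVec_of_isIdempotentElem [CommSemiring R] (hS : S.IsSymm)
    (hS' : IsIdempotentElem S) (v : ι → R) : v ⬝ᵥ S *ᵥ v = S *ᵥ v ⬝ᵥ S *ᵥ v := by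
  rw [← dotProduct_mulVec_transpose_mul_self, hS.eq, hS'.eq]

theorem IsSymm.dotProduct_mulVec_self_le_of_isIdempotentElem [CommRing R] [LinearOrder R]
    [IsStrictOrderedRing R] [DecidableEq ι] (hS : S.IsSymm) (hS' : IsIdempotentElem S)
    (v : ι → R) : S *ᵥ v ⬝ᵥ S *ᵥ v ≤ v ⬝ᵥ v := by
  have hT : (1 - S).IsSymm := isSymm_one.sub hS
  have hsplit : v ⬝ᵥ v = v ⬝ᵥ S *ᵥ v + v ⬝ᵥ (1 - S) *ᵥ v := by
    rw [← dotProduct_add, ← add_mulVec, add_sub_cancel, one_mulVec]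
  have hnonneg : 0 ≤ (1 - S) *ᵥ v ⬝ᵥ (1 - S) *ᵥ v :=
    Fintype.sum_nonneg fun _ => mul_self_nonneg _
  rw [hsplit, hS.dotProduct_mulVec_of_isIdempotentElem hS',
    hT.dotProduct_mulVec_of_isIdempotentElem hS'.one_sub]
  linarith

end Projection

theorem mulVec_surjective_of_rank_eq_card [Fintype κ] [Field R] {A : Matrix κ ι R}
    (hA : A.rank = Fintype.card κ) : Function.Surjective A.mulVec := by
  have hrange : LinearMap.range A.mulVecLin = ⊤ :=
    Submodule.eq_top_of_finrank_eq (by rw [Module.finrank_fintype_fun_eq_card]; exact hA)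
  exact LinearMap.range_eq_top.mp hrange

end Matrix

namespace IsMoorePenrose

variable {m n : ℕ} {A : Matrix (Fin m) (Fin n) ℝ} {Ap : Matrix (Fin n) (Fin m) ℝ}

theorem isSymm_one_sub_mul (h : IsMoorePenrose A Ap) : (1 - A * Ap).IsSymm :=
  isSymm_one.sub h.2.2.1

theorem isIdempotentElem_one_sub_mul (h : IsMoorePenrose A Ap) :
    IsIdempotentElem (1 - A * Ap) :=
  IsIdempotentElem.one_sub (by rw [IsIdempotentElem, ← Matrix.mul_assoc, h.1])

theorem one_sub_mul_mul_self (h : IsMoorePenrose A Ap) : (1 - A * Ap) * A = 0 := by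
  rw [Matrix.sub_mul, Matrix.one_mul, h.1, sub_self]

theorem mul_one_sub_mul_self (h : IsMoorePenrose A Ap) : A * (1 - Ap * A) = 0 := by
  rw [Matrix.mul_sub, Matrix.mul_one, ← Matrix.mul_assoc, h.1, sub_self]

theorem mul_eq_one_of_rank_eq (h : IsMoorePenrose A Ap) (hA : A.rank = m) : A * Ap = 1 := by
  obtain ⟨B, hB⟩ := mulVec_surjective_iff_exists_right_inverse.mp
    (mulVec_surjective_of_rank_eq_card (hA.trans (Fintype.card_fin m).symm))
  calc A * Ap = A * Ap * (A * B) := by rw [hB, Matrix.mul_one]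
    _ = 1 := by rw [← Matrix.mul_assoc, h.1, hB]

end IsMoorePenrose

theorem image_cylinder_general (n m : ℕ)
    (Q M : Matrix (Fin n) (Fin n) ℝ)
    (hM : M.PosSemidef) (hMsq : M * M = Q)
    (C : Matrix (Fin m) (Fin n) ℝ) (hrankC : C.rank = m)
    (Cp : Matrix (Fin n) (Fin m) ℝ) (hCp : IsMoorePenrose C Cp)
    (N : Matrix (Fin n) (Fin n) ℝ) (hN : N = 1 - Cp * C)
    (MNp : Matrix (Fin n) (Fin n) ℝ) (hMNp : IsMoorePenrose (M * N) MNp) :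
    C.mulVec '' {x : Fin n → ℝ | x ⬝ᵥ Q.mulVec x ≤ 1} =
      {y : Fin m → ℝ |
        y ⬝ᵥ (Cpᵀ * M * (1 - M * N * MNp) * M * Cp).mulVec y ≤ 1} := by
  set S := 1 - M * N * MNp
  have hMt : Mᵀ = M := hM.1
  have hSsymm : S.IsSymm := hMNp.isSymm_one_sub_mul
  have hSidem : IsIdempotentElem S := hMNp.isIdempotentElem_one_sub_mul
  have hSMN : S * (M * N) = 0 := hMNp.one_sub_mul_mul_self
  have hQ (x : Fin n → ℝ) : x ⬝ᵥ Q *ᵥ x = M *ᵥ x ⬝ᵥ M *ᵥ x := by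
    rw [← dotProduct_mulVec_transpose_mul_self, hMt, hMsq]
  have hR (y : Fin m → ℝ) :
      y ⬝ᵥ (Cpᵀ * M * S * M * Cp) *ᵥ y = (S * (M * Cp)) *ᵥ y ⬝ᵥ (S * (M * Cp)) *ᵥ y := by
    rw [← dotProduct_mulVec_transpose_mul_self,
      hSsymm.transpose_mul_mul_self_of_isIdempotentElem hSidem, transpose_mul, hMt]
    simp only [Matrix.mul_assoc]
  ext y
  constructor
  · rintro ⟨x, hx, rfl⟩
    have hSMCpC : S * (M * Cp) * C = S * M := by
      rw [Matrix.mul_assoc, Matrix.mul_assoc, ← sub_sub_cancel 1 (Cp * C), ← hN, Matrix.mul_sub,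
        Matrix.mul_sub, hSMN, Matrix.mul_one, sub_zero]
    calc C *ᵥ x ⬝ᵥ (Cpᵀ * M * S * M * Cp) *ᵥ (C *ᵥ x)
        = S *ᵥ (M *ᵥ x) ⬝ᵥ S *ᵥ (M *ᵥ x) := by rw [hR, mulVec_mulVec, hSMCpC, ← mulVec_mulVec]
      _ ≤ M *ᵥ x ⬝ᵥ M *ᵥ x := hSsymm.dotProduct_mulVec_self_le_of_isIdempotentElem hSidem _
      _ = x ⬝ᵥ Q *ᵥ x := (hQ x).symm
      _ ≤ 1 := hx
  · intro hy
    have hCX : C * (Cp - N * MNp * M * Cp) = 1 := by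
      rw [Matrix.mul_sub, hCp.mul_eq_one_of_rank_eq hrankC, Matrix.mul_assoc, Matrix.mul_assoc,
        ← Matrix.mul_assoc C, hN, hCp.mul_one_sub_mul_self, Matrix.zero_mul, sub_zero]
    have hMX : M * (Cp - N * MNp * M * Cp) = S * (M * Cp) := by
      rw [Matrix.mul_sub, Matrix.sub_mul, Matrix.one_mul]
      simp only [Matrix.mul_assoc]
    refine ⟨(Cp - N * MNp * M * Cp) *ᵥ y, ?_, by rw [mulVec_mulVec, hCX, one_mulVec]⟩
    rwa [Set.mem_ofPred_eq, hQ, mulVec_mulVec, hMX, ← hR]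

/-- The image of a (k,n)-cylinder under a surjective linear map y = Cx is the cylinder
determined by R = C⁺ᵀ M (I − (MN)(MN)⁺) M C⁺, where M = Q^{1/2} and N = I − C⁺C. -/
theorem image_cylinder (n m k : ℕ)
    (Q M : Matrix (Fin n) (Fin n) ℝ) (hQ : Q.PosSemidef) (hrankQ : Q.rank = k)
    (hM : M.PosSemidef) (hMsq : M * M = Q)
    (C : Matrix (Fin m) (Fin n) ℝ) (hrankC : C.rank = m)
    (Cp : Matrix (Fin n) (Fin m) ℝ) (hCp : IsMoorePenrose C Cp)
    (N : Matrix (Fin n) (Fin n) ℝ) (hN : N = 1 - Cp * C)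
    (MNp : Matrix (Fin n) (Fin n) ℝ) (hMNp : IsMoorePenrose (M * N) MNp) :
    C.mulVec '' {x : Fin n → ℝ | x ⬝ᵥ Q.mulVec x ≤ 1} =
      {y : Fin m → ℝ |
        y ⬝ᵥ (Cpᵀ * M * (1 - M * N * MNp) * M * Cp).mulVec y ≤ 1} :=
  image_cylinder_general n m Q M hM hMsq C hrankC Cp hCp N hN MNp hMNp
end

section
/- Let n ≥ 2, let Q be an n×n real symmetric positive semidefinite matrix, and let C be a 2×n real matrix with rank C = 2. Then there exists a 2×2 real symmetric positive semidefinite matrix R such that the image of the set {x ∈ ℝⁿ | xᵀQx ≤ 1} under the linear map x ↦ Cx equals {y ∈ ℝ² | yᵀRy ≤ 1}; in particular this image is either the whole plane (rank R = 0), a strip between two parallel lines (rank R = 1), or the region bounded by an ellipse (rank R = 2). -/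
/-! On the fibre `C⁻¹ y` the form `xᵀQx` is minimal at the points that are
`Q`-orthogonal to `ker C`, and such points exist: writing `Q = AᵀA`, they come from the
orthogonal projection onto `A (ker C)`. They form a subspace that `C` maps onto the plane, so
`C` has a linear right inverse `B` with values in it, and the image of the cylinder is
`{y | yᵀ (BᵀQB) y ≤ 1}`. -/

open Matrix

theorem exists_mem_inner_map_sub_eq_zero {V E : Type*} [AddCommGroup V] [Module ℝ V]
    [NormedAddCommGroup E] [InnerProductSpace ℝ E] [FiniteDimensional ℝ E]
    (f : V →ₗ[ℝ] E) (K : Submodule ℝ V) (x : V) :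
    ∃ v ∈ K, ∀ w ∈ K, inner ℝ (f w) (f (x - v)) = 0 := by
  obtain ⟨v, hvK, hv⟩ := Submodule.mem_map.mp ((K.map f).starProjection_apply_mem (f x))
  refine ⟨v, hvK, fun w hw => ?_⟩
  rw [map_sub, hv]
  exact Submodule.inner_right_of_mem_orthogonal (Submodule.mem_map_of_mem hw)
    (Submodule.sub_starProjection_mem_orthogonal (f x))

namespace Matrix

variable {m n : Type*} [Fintype m] [Fintype n]

theorem dotProduct_transpose_mul_mul_mulVec (Q : Matrix n n ℝ) (B : Matrix n m ℝ) (v w : m → ℝ) :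
    v ⬝ᵥ (Bᵀ * Q * B) *ᵥ w = (B *ᵥ v) ⬝ᵥ Q *ᵥ (B *ᵥ w) := by
  rw [← mulVec_mulVec, ← mulVec_mulVec, dotProduct_mulVec, vecMul_transpose]

theorem mulVec_surjective_of_rank_eq_card_s4 {C : Matrix m n ℝ} (hC : C.rank = Fintype.card m) :
    Function.Surjective C.mulVec := by
  have : LinearMap.range C.mulVecLin = ⊤ :=
    Submodule.eq_top_of_finrank_eq (by rw [← rank, hC, Module.finrank_fintype_fun_eq_card])
  exact LinearMap.range_eq_top.mp this

variable [DecidableEq n] {Q : Matrix n n ℝ}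

open scoped MatrixOrder in
theorem PosSemidef.exists_eq_transpose_mul_self (hQ : Q.PosSemidef) :
    ∃ B : Matrix n n ℝ, Q = Bᵀ * B := by
  obtain ⟨B, rfl⟩ := CStarAlgebra.nonneg_iff_eq_star_mul_self.mp hQ.nonneg
  exact ⟨B, rfl⟩

theorem PosSemidef.sup_orthogonal_eq_top (hQ : Q.PosSemidef) (K : Submodule ℝ (n → ℝ)) :
    K ⊔ (toBilin' Q).orthogonal K = ⊤ := by
  obtain ⟨B, rfl⟩ := hQ.exists_eq_transpose_mul_self
  refine Submodule.eq_top_iff'.mpr fun x => ?_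
  obtain ⟨v, hvK, hv⟩ := exists_mem_inner_map_sub_eq_zero
    ((WithLp.linearEquiv 2 ℝ (n → ℝ)).symm.toLinearMap ∘ₗ B.mulVecLin) K x
  refine Submodule.mem_sup.mpr ⟨v, hvK, x - v, ?_, add_sub_cancel v x⟩
  refine LinearMap.BilinForm.mem_orthogonal_iff.mpr fun w hw => ?_
  rw [toBilin'_apply', ← mul_one Bᵀ, dotProduct_transpose_mul_mul_mulVec, one_mulVec,
    dotProduct_comm]
  simpa [EuclideanSpace.inner_toLp_toLp] using hv w hw

theorem PosSemidef.dotProduct_mulVec_le_of_sub_mem {K : Submodule ℝ (n → ℝ)} (hQ : Q.PosSemidef)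
    {x x' : n → ℝ} (hx : x ∈ (toBilin' Q).orthogonal K) (hx' : x' - x ∈ K) :
    x ⬝ᵥ Q *ᵥ x ≤ x' ⬝ᵥ Q *ᵥ x' := by
  set d := x' - x
  have hdx : d ⬝ᵥ Q *ᵥ x = 0 := by
    simpa [toBilin'_apply'] using LinearMap.BilinForm.mem_orthogonal_iff.mp hx d hx'
  have hxd : x ⬝ᵥ Q *ᵥ d = 0 := by
    rwa [dotProduct_mulVec, ← mulVec_transpose, ← conjTranspose_eq_transpose_of_trivial,
      hQ.isHermitian.eq, dotProduct_comm]
  have hd : 0 ≤ d ⬝ᵥ Q *ᵥ d := by simpa using hQ.dotProduct_mulVec_nonneg d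
  have : x' = x + d := by simp [d]
  rw [this, mulVec_add, dotProduct_add, add_dotProduct, add_dotProduct, hdx, hxd]
  linarith

theorem exists_rightInverse_orthogonal_ker {C : Matrix m n ℝ} (hC : Function.Surjective C.mulVec)
    (hQ : Q.PosSemidef) :
    ∃ B : Matrix n m ℝ, ∀ y, C *ᵥ (B *ᵥ y) = y ∧
      B *ᵥ y ∈ (toBilin' Q).orthogonal (LinearMap.ker C.mulVecLin) := by
  classical
  set S := (toBilin' Q).orthogonal (LinearMap.ker C.mulVecLin)
  have hCS : LinearMap.range (C.mulVecLin ∘ₗ S.subtype) = ⊤ := by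
    refine LinearMap.range_eq_top.mpr fun y => ?_
    obtain ⟨x, rfl⟩ := hC y
    have hx : x ∈ LinearMap.ker C.mulVecLin ⊔ S := by
      rw [hQ.sup_orthogonal_eq_top]; trivial
    obtain ⟨k, hk, s, hs, rfl⟩ := Submodule.mem_sup.mp hx
    refine ⟨⟨s, hs⟩, ?_⟩
    rw [LinearMap.mem_ker, mulVecLin_apply] at hk
    simp [mulVec_add, hk]
  obtain ⟨g, hg⟩ := (C.mulVecLin ∘ₗ S.subtype).exists_rightInverse_of_surjective hCS
  refine ⟨LinearMap.toMatrix' (S.subtype ∘ₗ g), fun y => ?_⟩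
  rw [LinearMap.toMatrix'_mulVec]
  exact ⟨congrArg (· y) hg, (g y).2⟩

end Matrix

theorem image_cylinder_plane_general (n : ℕ)
    (Q : Matrix (Fin n) (Fin n) ℝ) (hQ : Q.PosSemidef)
    (C : Matrix (Fin 2) (Fin n) ℝ) (hrankC : C.rank = 2) :
    ∃ R : Matrix (Fin 2) (Fin 2) ℝ, R.PosSemidef ∧
      C.mulVec '' {x : Fin n → ℝ | x ⬝ᵥ Q.mulVec x ≤ 1} =
        {y : Fin 2 → ℝ | y ⬝ᵥ R.mulVec y ≤ 1} := by
  obtain ⟨B, hB⟩ := exists_rightInverse_orthogonal_ker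
    (mulVec_surjective_of_rank_eq_card_s4 (hrankC.trans (Fintype.card_fin 2).symm)) hQ
  refine ⟨Bᵀ * Q * B, by simpa using hQ.conjTranspose_mul_mul_same B, ?_⟩
  ext y
  simp only [Set.mem_image, Set.mem_ofPred_eq, dotProduct_transpose_mul_mul_mulVec]
  constructor
  · rintro ⟨x, hx, rfl⟩
    refine le_trans (hQ.dotProduct_mulVec_le_of_sub_mem (hB _).2 ?_) hx
    rw [LinearMap.mem_ker, mulVecLin_apply, mulVec_sub, (hB _).1, sub_self]
  · exact fun hy => ⟨B *ᵥ y, hy, (hB y).1⟩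

/-- The projection of a (k,n)-cylinder onto a plane is again given by a quadratic
inequality with a 2×2 symmetric positive semidefinite matrix R: it is the whole plane,
a strip, or an elliptical region, according to the rank of R. -/
theorem image_cylinder_plane (n : ℕ) (hn : 2 ≤ n)
    (Q : Matrix (Fin n) (Fin n) ℝ) (hQ : Q.PosSemidef)
    (C : Matrix (Fin 2) (Fin n) ℝ) (hrankC : C.rank = 2) :
    ∃ R : Matrix (Fin 2) (Fin 2) ℝ, R.PosSemidef ∧
      C.mulVec '' {x : Fin n → ℝ | x ⬝ᵥ Q.mulVec x ≤ 1} =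
        {y : Fin 2 → ℝ | y ⬝ᵥ R.mulVec y ≤ 1} :=
  image_cylinder_plane_general n Q hQ C hrankC
end

section
/- In the setting of the general linear tracking problem, let A ∈ ℝ^{n×n}, B ∈ ℝ^{n×p}, C ∈ ℝ^{n×m}, D ∈ ℝ^{q×n}, F ∈ ℝ^{q×m}, K ∈ ℝ^{k×n} with rank K = k, G ∈ ℝ^{m×m} symmetric positive definite, and let K⁺, (KB)⁺, (D(K⁺K−I))⁺ be Moore–Penrose pseudoinverses, with H₁, H₂, H₃, H₄, H₅ defined as H₁ = KAK⁺ + KB(KB)⁺KA(D(K⁺K−I))⁺DK⁺, H₂ = KC + KB(KB)⁺KA(D(K⁺K−I))⁺F, H₃ = KB, H₄ = DK⁺ + D(D(K⁺K−I))⁺DK⁺, H₅ = F + D(D(K⁺K−I))⁺F. Assume KB(KB)⁺KA(D(I−K⁺K))⁺D(I−K⁺K) = KA(I−K⁺K). Let P be k×k symmetric positive definite, α > 0, and let Y ∈ ℝ^{p×q} be such that [[PH₁ + H₁ᵀP + αP, PH₂],[H₂ᵀP, −αG]] + [[PH₃YH₄ + (PH₃YH₄)ᵀ, PH₃YH₅],[(PH₃YH₅)ᵀ,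 0]] is negative definite. Then X = (KB)⁺KA(D(K⁺K−I))⁺ + Y + (KB)⁺KB·Y·D(D(K⁺K−I))⁺ satisfies K(A+BXD)(I−K⁺K) = 0 and the block matrix [[P·K(A+BXD)K⁺ + (K(A+BXD)K⁺)ᵀP + αP, P·K(C+BXF)],[(K(C+BXF))ᵀP, −αG]] is negative definite. -/
/-!
With `E = K⁺K`, an orthogonal projection, and `M = D(E - I)`, one has `M E = 0`; the
Moore–Penrose identities for `M⁺` then give `D M⁺ M = -M`, i.e. `I + D M⁺` annihilates
`D(I - E)`. Since `KB (KB)⁺ KB = KB`, the gain `X` gives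
`KBX = KB (KB)⁺ KA M⁺ + KBY (I + D M⁺)`. Hence `K(A + BXD)(I - E)` collapses to the
compatibility hypothesis, while `K(A + BXD)K⁺ = H₁ + H₃YH₄` and `K(C + BXF) = H₂ + H₃YH₅`,
so the closed-loop matrix is exactly the matrix of the assumed inequality.
-/

open Matrix

namespace Matrix

variable {R : Type*} [CommRing R]

theorem one_add_mul_mul_mul_sub_one_eq_zero {m n : Type*} [Fintype m] [Fintype n]
    [DecidableEq m] [DecidableEq n] {E : Matrix n n R} (hE : IsIdempotentElem E)
    (hEt : Eᵀ = E) (D : Matrix m n R) {N : Matrix n m R}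
    (h₁ : D * (E - 1) * N * (D * (E - 1)) = D * (E - 1))
    (h₄ : (N * (D * (E - 1)))ᵀ = N * (D * (E - 1))) :
    (1 + D * N) * (D * (E - 1)) = 0 := by
  set M := D * (E - 1)
  have hME : M * E = 0 := by
    simp only [M, Matrix.mul_assoc, Matrix.sub_mul, hE.eq, Matrix.one_mul, sub_self,
      Matrix.mul_zero]
  have hENM : E * (N * M) = 0 := by
    have h := congrArg transpose (show N * M * E = 0 by rw [Matrix.mul_assoc, hME, Matrix.mul_zero])
    rwa [transpose_mul, hEt, h₄, transpose_zero] at h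
  have hD : D * E - M = D := by simp only [M, Matrix.mul_sub, Matrix.mul_one, sub_sub_cancel]
  calc (1 + D * N) * M = M + (D * E - M) * N * M := by
        rw [hD, Matrix.add_mul, Matrix.one_mul]
    _ = 0 := by
        rw [Matrix.sub_mul, Matrix.sub_mul, h₁, Matrix.mul_assoc (D * E), Matrix.mul_assoc D E,
          hENM, Matrix.mul_zero, zero_sub, add_neg_cancel]

theorem fromBlocks_lyapunov_add {k m : Type*} [Fintype k] {P : Matrix k k R} (hP : Pᵀ = P)
    (α : R) (G : Matrix m m R)
    (H₁ J₁ : Matrix k k R) (H₂ J₂ : Matrix k m R) :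
    fromBlocks (P * (H₁ + J₁) + (H₁ + J₁)ᵀ * P + α • P) (P * (H₂ + J₂))
        ((H₂ + J₂)ᵀ * P) (-(α • G)) =
      fromBlocks (P * H₁ + H₁ᵀ * P + α • P) (P * H₂) (H₂ᵀ * P) (-(α • G)) +
        fromBlocks (P * J₁ + (P * J₁)ᵀ) (P * J₂) ((P * J₂)ᵀ) 0 := by
  rw [fromBlocks_add]
  congr 1 <;> simp only [Matrix.mul_add, Matrix.add_mul, transpose_add, transpose_mul, hP,
    add_zero]
  abel

end Matrix

theorem controller_reconstruction_general (n p q m k : ℕ)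
    (A : Matrix (Fin n) (Fin n) ℝ) (B : Matrix (Fin n) (Fin p) ℝ)
    (C : Matrix (Fin n) (Fin m) ℝ) (D : Matrix (Fin q) (Fin n) ℝ)
    (F : Matrix (Fin q) (Fin m) ℝ)
    (K : Matrix (Fin k) (Fin n) ℝ)
    (G : Matrix (Fin m) (Fin m) ℝ)
    (Kp : Matrix (Fin n) (Fin k) ℝ) (hKp : IsMoorePenrose K Kp)
    (KBp : Matrix (Fin p) (Fin k) ℝ) (hKBp : IsMoorePenrose (K * B) KBp)
    (DKp : Matrix (Fin n) (Fin q) ℝ) (hDKp : IsMoorePenrose (D * (Kp * K - 1)) DKp)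
    (H₁ : Matrix (Fin k) (Fin k) ℝ)
    (hH₁ : H₁ = K * A * Kp + K * B * KBp * (K * A) * DKp * (D * Kp))
    (H₂ : Matrix (Fin k) (Fin m) ℝ)
    (hH₂ : H₂ = K * C + K * B * KBp * (K * A) * DKp * F)
    (H₃ : Matrix (Fin k) (Fin p) ℝ) (hH₃ : H₃ = K * B)
    (H₄ : Matrix (Fin q) (Fin k) ℝ) (hH₄ : H₄ = D * Kp + D * DKp * (D * Kp))
    (H₅ : Matrix (Fin q) (Fin m) ℝ) (hH₅ : H₅ = F + D * DKp * F)
    (hcond : K * B * KBp * (K * A) * (-DKp) * (D * (1 - Kp * K)) = K * A * (1 - Kp * K))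
    (P : Matrix (Fin k) (Fin k) ℝ) (hP : P.PosDef)
    (α : ℝ)
    (Y : Matrix (Fin p) (Fin q) ℝ)
    (hY : (-(Matrix.fromBlocks (P * H₁ + H₁ᵀ * P + α • P) (P * H₂) (H₂ᵀ * P) (-(α • G)) +
        Matrix.fromBlocks (P * H₃ * Y * H₄ + (P * H₃ * Y * H₄)ᵀ) (P * H₃ * Y * H₅)
          ((P * H₃ * Y * H₅)ᵀ) 0)).PosDef)
    (X : Matrix (Fin p) (Fin q) ℝ)
    (hX : X = KBp * (K * A) * DKp + Y + KBp * (K * B) * Y * (D * DKp)) :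
    K * (A + B * X * D) * (1 - Kp * K) = 0 ∧
    (-(Matrix.fromBlocks
        (P * (K * (A + B * X * D) * Kp) + (K * (A + B * X * D) * Kp)ᵀ * P + α • P)
        (P * (K * (C + B * X * F)))
        ((K * (C + B * X * F))ᵀ * P) (-(α • G)))).PosDef := by
  obtain ⟨hK₁, -, -, hK₄⟩ := hKp
  obtain ⟨hB₁, -, -, -⟩ := hKBp
  obtain ⟨hD₁, -, -, hD₄⟩ := hDKp
  have hE : IsIdempotentElem (Kp * K) := by
    rw [IsIdempotentElem, Matrix.mul_assoc, ← Matrix.mul_assoc K, hK₁]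
  have hZ : (1 + D * DKp) * (D * (1 - Kp * K)) = 0 := by
    rw [← neg_sub, Matrix.mul_neg, Matrix.mul_neg,
      one_add_mul_mul_mul_sub_one_eq_zero hE hK₄ D hD₁ hD₄, neg_zero]
  have hKBX : K * B * X = K * B * KBp * (K * A) * DKp + K * B * Y * (1 + D * DKp) := by
    calc K * B * X = K * B * KBp * (K * A) * DKp + K * B * Y
          + K * B * KBp * (K * B) * Y * (D * DKp) := by
          simp only [hX, Matrix.mul_add, Matrix.mul_assoc]
      _ = _ := by rw [hB₁, Matrix.mul_add, Matrix.mul_one, add_assoc]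
  have hcond' : K * B * KBp * (K * A) * DKp * (D * (1 - Kp * K)) = -(K * A * (1 - Kp * K)) := by
    rw [← hcond, Matrix.mul_neg, Matrix.neg_mul, neg_neg]
  have hA : K * (A + B * X * D) * Kp = H₁ + H₃ * Y * H₄ := by
    simp only [hH₁, hH₃, hH₄, Matrix.mul_add, Matrix.add_mul, ← Matrix.mul_assoc, hKBX,
      Matrix.mul_one, add_assoc]
  have hC : K * (C + B * X * F) = H₂ + H₃ * Y * H₅ := by
    simp only [hH₂, hH₃, hH₅, Matrix.mul_add, Matrix.add_mul, ← Matrix.mul_assoc, hKBX,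
      Matrix.mul_one, add_assoc]
  have hPt : Pᵀ = P := by
    simpa only [conjTranspose_eq_transpose_of_trivial] using hP.isHermitian.eq
  refine ⟨?_, ?_⟩
  · calc K * (A + B * X * D) * (1 - Kp * K)
        = K * A * (1 - Kp * K) + K * B * X * (D * (1 - Kp * K)) := by
          simp only [Matrix.mul_add, Matrix.add_mul, Matrix.mul_assoc]
      _ = 0 := by
          rw [hKBX, Matrix.add_mul, hcond', Matrix.mul_assoc (K * B * Y), hZ, Matrix.mul_zero]
          abel
  · rw [hA, hC, fromBlocks_lyapunov_add hPt]
    simpa only [Matrix.mul_assoc] using hY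

/-- Controller reconstruction: if Y solves the linear matrix inequality (5.9), then
X = (KB)⁺KA(D(K⁺K−I))⁺ + Y + (KB)⁺KB·Y·D(D(K⁺K−I))⁺ satisfies K(A+BXD)(I−K⁺K) = 0
and the closed-loop LMI is negative definite.  Here (D(I−K⁺K))⁺ = −(D(K⁺K−I))⁺. -/
theorem controller_reconstruction (n p q m k : ℕ)
    (A : Matrix (Fin n) (Fin n) ℝ) (B : Matrix (Fin n) (Fin p) ℝ)
    (C : Matrix (Fin n) (Fin m) ℝ) (D : Matrix (Fin q) (Fin n) ℝ)
    (F : Matrix (Fin q) (Fin m) ℝ)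
    (K : Matrix (Fin k) (Fin n) ℝ) (hrankK : K.rank = k)
    (G : Matrix (Fin m) (Fin m) ℝ) (hG : G.PosDef)
    (Kp : Matrix (Fin n) (Fin k) ℝ) (hKp : IsMoorePenrose K Kp)
    (KBp : Matrix (Fin p) (Fin k) ℝ) (hKBp : IsMoorePenrose (K * B) KBp)
    (DKp : Matrix (Fin n) (Fin q) ℝ) (hDKp : IsMoorePenrose (D * (Kp * K - 1)) DKp)
    (H₁ : Matrix (Fin k) (Fin k) ℝ)
    (hH₁ : H₁ = K * A * Kp + K * B * KBp * (K * A) * DKp * (D * Kp))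
    (H₂ : Matrix (Fin k) (Fin m) ℝ)
    (hH₂ : H₂ = K * C + K * B * KBp * (K * A) * DKp * F)
    (H₃ : Matrix (Fin k) (Fin p) ℝ) (hH₃ : H₃ = K * B)
    (H₄ : Matrix (Fin q) (Fin k) ℝ) (hH₄ : H₄ = D * Kp + D * DKp * (D * Kp))
    (H₅ : Matrix (Fin q) (Fin m) ℝ) (hH₅ : H₅ = F + D * DKp * F)
    (hcond : K * B * KBp * (K * A) * (-DKp) * (D * (1 - Kp * K)) = K * A * (1 - Kp * K))
    (P : Matrix (Fin k) (Fin k) ℝ) (hP : P.PosDef)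
    (α : ℝ) (hα : 0 < α)
    (Y : Matrix (Fin p) (Fin q) ℝ)
    (hY : (-(Matrix.fromBlocks (P * H₁ + H₁ᵀ * P + α • P) (P * H₂) (H₂ᵀ * P) (-(α • G)) +
        Matrix.fromBlocks (P * H₃ * Y * H₄ + (P * H₃ * Y * H₄)ᵀ) (P * H₃ * Y * H₅)
          ((P * H₃ * Y * H₅)ᵀ) 0)).PosDef)
    (X : Matrix (Fin p) (Fin q) ℝ)
    (hX : X = KBp * (K * A) * DKp + Y + KBp * (K * B) * Y * (D * DKp)) :
    K * (A + B * X * D) * (1 - Kp * K) = 0 ∧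
    (-(Matrix.fromBlocks
        (P * (K * (A + B * X * D) * Kp) + (K * (A + B * X * D) * Kp)ᵀ * P + α • P)
        (P * (K * (C + B * X * F)))
        ((K * (C + B * X * F))ᵀ * P) (-(α • G)))).PosDef :=
  controller_reconstruction_general n p q m k A B C D F K G Kp hKp KBp hKBp DKp hDKp H₁ hH₁ H₂ hH₂
    H₃ hH₃ H₄ hH₄ H₅ hH₅ hcond P hP α Y hY X hX
end

section
/- Let C be a k×n real matrix with rank C = k, with Moore–Penrose pseudoinverse C⁺, and let A be an n×n real matrix with CA(I − C⁺C) = 0. Then X = CAC⁺ is the unique k×k real matrix satisfying XC = CA. -/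
open Matrix

lemma aux_eq_one {k : ℕ} (M : Matrix (Fin k) (Fin k) ℝ) (hr : M.rank = k)
    (hi : M * M = M) : M = 1 := by
  have hsurj : Function.Surjective M.mulVecLin := by
    rw [← LinearMap.range_eq_top]
    apply Submodule.eq_top_of_finrank_eq
    rw [← Matrix.rank, hr]
    simp [Module.finrank_pi]
  have hfix : ∀ y : Fin k → ℝ, M *ᵥ y = y := by
    intro y
    obtain ⟨x, rfl⟩ := hsurj y
    have := congrArg (fun N => N *ᵥ x) hi
    simpa [Matrix.mulVec_mulVec, Matrix.mulVecLin_apply] using this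
  ext i j
  have := congrFun (hfix (Pi.single j 1)) i
  simpa [Matrix.mulVec_single, Matrix.one_apply, Pi.single_apply, eq_comm] using this

/-- If C has full row rank and CA(I−C⁺C) = 0, then X = CAC⁺ is the unique solution of
XC = CA. -/
theorem unique_reduced_dynamics (n k : ℕ)
    (C : Matrix (Fin k) (Fin n) ℝ) (hrankC : C.rank = k)
    (Cp : Matrix (Fin n) (Fin k) ℝ) (hCp : IsMoorePenrose C Cp)
    (A : Matrix (Fin n) (Fin n) ℝ) (hCA : C * A * (1 - Cp * C) = 0) :
    (C * A * Cp) * C = C * A ∧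
      ∀ X : Matrix (Fin k) (Fin k) ℝ, X * C = C * A → X = C * A * Cp := by
  obtain ⟨h1, h2, h3, h4⟩ := hCp
  have hCCp : C * Cp = 1 := by
    apply aux_eq_one
    · refine le_antisymm (by simpa using (C * Cp).rank_le_card_width) ?_
      have h5 : (C * Cp * C).rank ≤ (C * Cp).rank := Matrix.rank_mul_le_left _ _
      rw [h1, hrankC] at h5
      exact h5
    · rw [← Matrix.mul_assoc, h1]
  have hfirst : C * A * Cp * C = C * A := by
    rw [Matrix.mul_sub, Matrix.mul_one, sub_eq_zero] at hCA
    rw [← Matrix.mul_assoc] at hCA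
    exact hCA.symm
  refine ⟨hfirst, fun X hX => ?_⟩
  calc X = X * (C * Cp) := by rw [hCCp, Matrix.mul_one]
    _ = (X * C) * Cp := by rw [Matrix.mul_assoc]
    _ = C * A * Cp := by rw [hX]
end

section
/- Let a < l and b > 0 be real numbers, let f : ℝ → ℝ satisfy |f(t)| ≤ 1 for all t ≥ 0, and let y : ℝ → ℝ be differentiable with y′(t) = (a − l)·y(t) + b·f(t) for all t ≥ 0. Then limsup_{t→∞} |y(t)| ≤ b/(l − a), and for all 0 ≤ t₀ ≤ t, if |y(t₀)| ≤ b/(l − a) then |y(t)| ≤ b/(l − a). -/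
open Filter Set Topology

/-
Multiplying by the integrating factor `exp (μ t)`, `μ = l - a`, turns the equation into
`(exp (μ t) y t)' = exp (μ t) b f t`, whose norm is at most `b exp (μ t)`. Comparing with the
boundary function `(b/μ) exp (μ t) + const` gives `|y t| - b/μ ≤ exp (-μ (t - t₀)) (|y t₀| - b/μ)`:
the excess of `|y|` over `b/μ` decays exponentially, which is both invariance and attraction.
-/

section IntegratingFactor

variable {E : Type*} [NormedAddCommGroup E] [NormedSpace ℝ E]

theorem HasDerivAt.exp_mul_smul {y : ℝ → E} {y' : E} {s : ℝ} (μ : ℝ) (hy : HasDerivAt y y' s) :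
    HasDerivAt (fun u => Real.exp (μ * u) • y u) (Real.exp (μ * s) • (y' + μ • y s)) s := by
  have hexp : HasDerivAt (fun u => Real.exp (μ * u)) (Real.exp (μ * s) * μ) s := by
    simpa using ((hasDerivAt_id s).const_mul μ).exp
  refine (hexp.smul hy).congr_deriv ?_
  rw [smul_add, smul_smul, mul_comm, add_comm]

theorem exp_mul_norm_le_of_norm_deriv_add_smul_le {y y' : ℝ → E} {μ c t₀ t : ℝ} (hμ : μ ≠ 0)
    (ht : t₀ ≤ t) (hy : ∀ s ∈ Icc t₀ t, HasDerivAt y (y' s) s)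
    (hc : ∀ s ∈ Ico t₀ t, ‖y' s + μ • y s‖ ≤ c) :
    Real.exp (μ * t) * (‖y t‖ - c / μ) ≤ Real.exp (μ * t₀) * (‖y t₀‖ - c / μ) := by
  set B : ℝ → ℝ := fun u => c / μ * Real.exp (μ * u) + Real.exp (μ * t₀) * (‖y t₀‖ - c / μ)
  have hB : ∀ u, HasDerivAt B (c * Real.exp (μ * u)) u := fun u => by
    have := (((hasDerivAt_id' u).const_mul μ).exp.const_mul (c / μ)).add_const
      (Real.exp (μ * t₀) * (‖y t₀‖ - c / μ))
    refine this.congr_deriv ?_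
    field_simp
  have hz : ∀ s ∈ Icc t₀ t, HasDerivAt (fun u => Real.exp (μ * u) • y u)
      (Real.exp (μ * s) • (y' s + μ • y s)) s := fun s hs => (hy s hs).exp_mul_smul μ
  have ha : ‖Real.exp (μ * t₀) • y t₀‖ ≤ B t₀ := by
    rw [norm_smul, Real.norm_of_nonneg (Real.exp_pos _).le]
    exact le_of_eq (by ring)
  have hbound := image_norm_le_of_norm_deriv_right_le_deriv_boundary
    (fun s hs => (hz s hs).continuousAt.continuousWithinAt)
    (fun s hs => (hz s (Ico_subset_Icc_self hs)).hasDerivWithinAt) ha hB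
    (fun s hs => by
      rw [norm_smul, Real.norm_of_nonneg (Real.exp_pos _).le, mul_comm]
      exact mul_le_mul_of_nonneg_right (hc s hs) (Real.exp_pos _).le)
    (right_mem_Icc.mpr ht)
  rw [norm_smul, Real.norm_of_nonneg (Real.exp_pos _).le] at hbound
  simp only [B] at hbound
  linarith

theorem norm_sub_le_exp_mul_of_norm_deriv_add_smul_le {y y' : ℝ → E} {μ c t₀ t : ℝ}
    (hμ : μ ≠ 0) (ht : t₀ ≤ t) (hy : ∀ s ∈ Icc t₀ t, HasDerivAt y (y' s) s)
    (hc : ∀ s ∈ Ico t₀ t, ‖y' s + μ • y s‖ ≤ c) :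
    ‖y t‖ - c / μ ≤ Real.exp (-(μ * (t - t₀))) * (‖y t₀‖ - c / μ) := by
  have h := mul_le_mul_of_nonneg_left (exp_mul_norm_le_of_norm_deriv_add_smul_le hμ ht hy hc)
    (Real.exp_pos (-(μ * t))).le
  rwa [← mul_assoc, ← mul_assoc, ← Real.exp_add, ← Real.exp_add, neg_add_cancel, Real.exp_zero,
    one_mul, show -(μ * t) + μ * t₀ = -(μ * (t - t₀)) by ring] at h

end IntegratingFactor

theorem limsup_le_of_eventually_le_of_tendsto {α : Type*} {l : Filter α} [l.NeBot] {u v : α → ℝ}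
    {r : ℝ} (hu : IsCoboundedUnder (· ≤ ·) l u) (huv : u ≤ᶠ[l] v) (hv : Tendsto v l (𝓝 r)) :
    limsup u l ≤ r :=
  (limsup_le_limsup huv hu hv.isBoundedUnder_le).trans hv.limsup_eq.le

/-- Motivating example: the interval [−b/(l−a), b/(l−a)] is attracting and invariant
for the scalar error dynamics y′ = (a−l)y + bf with |f| ≤ 1. -/
theorem scalar_attracting_interval (a l b : ℝ) (hal : a < l) (hb : 0 < b)
    (f : ℝ → ℝ) (hf : ∀ t : ℝ, 0 ≤ t → |f t| ≤ 1)
    (y : ℝ → ℝ) (hy : ∀ t : ℝ, 0 ≤ t → HasDerivAt y ((a - l) * y t + b * f t) t) :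
    limsup (fun t => |y t|) atTop ≤ b / (l - a) ∧
      ∀ t₀ t : ℝ, 0 ≤ t₀ → t₀ ≤ t → |y t₀| ≤ b / (l - a) → |y t| ≤ b / (l - a) := by
  have hμ : 0 < l - a := sub_pos.mpr hal
  have hdecay : ∀ t₀ t, 0 ≤ t₀ → t₀ ≤ t →
      |y t| - b / (l - a) ≤ Real.exp (-((l - a) * (t - t₀))) * (|y t₀| - b / (l - a)) :=
    fun t₀ t h₀ ht => norm_sub_le_exp_mul_of_norm_deriv_add_smul_le hμ.ne' ht
      (fun s hs => hy s (h₀.trans hs.1))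
      (fun s hs => by
        rw [smul_eq_mul, show (a - l) * y s + b * f s + (l - a) * y s = b * f s by ring,
          Real.norm_eq_abs, abs_mul, abs_of_pos hb]
        exact mul_le_of_le_one_right hb.le (hf s (h₀.trans hs.1)))
  refine ⟨?_, fun t₀ t h₀ ht hy₀ => ?_⟩
  · have hv : Tendsto (fun t => b / (l - a) + Real.exp (-((l - a) * (t - 0))) * (|y 0| - b / (l - a)))
        atTop (𝓝 (b / (l - a) + 0 * (|y 0| - b / (l - a)))) := by
      refine (Real.tendsto_exp_neg_atTop_nhds_zero.comp ?_).mul_const _ |>.const_add _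
      simpa using tendsto_id.const_mul_atTop hμ
    refine limsup_le_of_eventually_le_of_tendsto
      (isCoboundedUnder_le_of_le atTop fun t => abs_nonneg (y t)) ?_
      (by rwa [zero_mul, add_zero] at hv)
    filter_upwards [eventually_ge_atTop 0] with t ht
    linarith [hdecay 0 t le_rfl ht]
  · nlinarith [hdecay t₀ t h₀ ht, Real.exp_pos (-((l - a) * (t - t₀)))]
end

section
/- Let A be an m×n real matrix and let A⁺ be its Moore–Penrose pseudoinverse. Then (AᵀA + εI)⁻¹Aᵀ tends to A⁺ as ε → 0⁺; here for every ε > 0 the matrix AᵀA + εI is invertible, and the limit holds even when AᵀA is not invertible. -/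
open Matrix Filter

/-!
Write `B = AᵀA` and `C = A⁺A⁺ᵀA⁺`. The Penrose equations give `B A⁺ = Aᵀ` and `A⁺ = B C`, hence
`(B + εI)⁻¹Aᵀ = A⁺ - ε(B + εI)⁻¹A⁺ = A⁺ - ε(B + εI)⁻¹B C`. Diagonalising the positive semidefinite
matrix `B` by an orthogonal matrix, `ε(B + εI)⁻¹B` has the eigenvalues `ελᵢ/(λᵢ + ε) ∈ [0, ε]`
(with `λᵢ ≥ 0` those of `B`), so it tends to `0` as `ε → 0⁺`.
-/

open Topology Unitary

theorem tendsto_mul_inv_add_mul_nhdsGT_zero {a : ℝ} (ha : 0 ≤ a) :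
    Tendsto (fun ε : ℝ => ε * (a + ε)⁻¹ * a) (𝓝[>] 0) (𝓝 0) := by
  refine squeeze_zero' ?_ ?_ (tendsto_nhdsWithin_of_tendsto_nhds tendsto_id)
  · filter_upwards [self_mem_nhdsWithin] with ε (hε : 0 < ε)
    positivity
  · filter_upwards [self_mem_nhdsWithin] with ε (hε : 0 < ε)
    rw [mul_assoc]
    exact mul_le_of_le_one_right hε.le (inv_mul_le_one_of_le₀ (by linarith) (by linarith))

section

variable {n : Type*} [Fintype n]

theorem Matrix.posSemidef_transpose_mul_self {m : Type*} [Fintype m] (A : Matrix m n ℝ) :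
    (Aᵀ * A).PosSemidef :=
  posSemidef_conjTranspose_mul_self A

variable [DecidableEq n]

theorem Matrix.posDef_transpose_mul_self_add_smul_one {m : Type*} [Fintype m]
    (A : Matrix m n ℝ) {ε : ℝ} (hε : 0 < ε) : (Aᵀ * A + ε • (1 : Matrix n n ℝ)).PosDef :=
  PosDef.posSemidef_add (posSemidef_transpose_mul_self A) (PosDef.one.smul hε)

namespace Matrix.IsHermitian

variable {B : Matrix n n ℝ} (hB : B.IsHermitian)

theorem eq_conj_diagonal_eigenvalues :
    B = conjStarAlgAut ℝ _ hB.eigenvectorUnitary (diagonal hB.eigenvalues) := by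
  simpa [RCLike.ofReal_real_eq_id] using hB.spectral_theorem

theorem inv_add_smul_one {ε : ℝ} (hε : ∀ i, hB.eigenvalues i + ε ≠ 0) :
    (B + ε • (1 : Matrix n n ℝ))⁻¹ =
      conjStarAlgAut ℝ _ hB.eigenvectorUnitary (diagonal fun i => (hB.eigenvalues i + ε)⁻¹) := by
  refine inv_eq_right_inv ?_
  set φ := conjStarAlgAut ℝ _ hB.eigenvectorUnitary
  -- `φ` depends on `B` through `hB`, so `B` is only rewritten in the summand
  rw [congrArg (· + ε • 1) hB.eq_conj_diagonal_eigenvalues, ← map_one φ, ← map_smul, ← map_add,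
    ← map_mul, smul_one_eq_diagonal, diagonal_add, diagonal_mul_diagonal, ← diagonal_one]
  congr 2
  ext i
  exact mul_inv_cancel₀ (hε i)

end Matrix.IsHermitian

theorem Matrix.PosSemidef.tendsto_smul_inv_add_smul_one_mul {B : Matrix n n ℝ}
    (hB : B.PosSemidef) :
    Tendsto (fun ε : ℝ => ε • ((B + ε • (1 : Matrix n n ℝ))⁻¹ * B)) (𝓝[>] 0) (𝓝 0) := by
  set φ := conjStarAlgAut ℝ _ hB.1.eigenvectorUnitary
  set g : ℝ → n → ℝ := fun ε i => ε * (hB.1.eigenvalues i + ε)⁻¹ * hB.1.eigenvalues i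
  have hEq : ∀ ε : ℝ, 0 < ε → ε • ((B + ε • (1 : Matrix n n ℝ))⁻¹ * B) = φ (diagonal (g ε)) := by
    intro ε hε
    rw [hB.1.inv_add_smul_one fun i => (add_pos_of_nonneg_of_pos (hB.eigenvalues_nonneg i) hε).ne']
    conv_lhs => enter [2, 2]; rw [hB.1.eq_conj_diagonal_eigenvalues]
    rw [← map_mul, ← map_smul, diagonal_mul_diagonal, ← diagonal_smul]
    congr 2
    ext i
    simp only [g, Pi.smul_apply, smul_eq_mul, mul_assoc]
  have hcont : Continuous fun d : n → ℝ => φ (diagonal d) := by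
    simp only [φ, conjStarAlgAut_apply]
    exact (continuous_const.matrix_mul continuous_id.matrix_diagonal).matrix_mul continuous_const
  have hg : Tendsto g (𝓝[>] 0) (𝓝 0) :=
    tendsto_pi_nhds.2 fun i => tendsto_mul_inv_add_mul_nhdsGT_zero (hB.eigenvalues_nonneg i)
  refine Tendsto.congr' ?_ (by simpa [φ] using (hcont.tendsto 0).comp hg)
  filter_upwards [self_mem_nhdsWithin] with ε hε
  exact (hEq ε hε).symm

end

namespace IsMoorePenrose

variable {m n : ℕ} {A : Matrix (Fin m) (Fin n) ℝ} {Ap : Matrix (Fin n) (Fin m) ℝ}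

theorem transpose_mul_self_mul (h : IsMoorePenrose A Ap) : Aᵀ * A * Ap = Aᵀ := by
  obtain ⟨hAApA, -, hAAp, -⟩ := h
  rw [Matrix.mul_assoc, ← hAAp, ← transpose_mul, hAApA]

theorem eq_transpose_mul_self_mul (h : IsMoorePenrose A Ap) :
    Ap = Aᵀ * A * (Ap * Apᵀ * Ap) := by
  calc Ap = (Ap * A)ᵀ * Ap := by rw [h.2.2.2, h.2.1]
    _ = Aᵀ * A * Ap * Apᵀ * Ap := by rw [transpose_mul, h.transpose_mul_self_mul]
    _ = _ := by simp only [Matrix.mul_assoc]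

theorem inv_add_smul_one_mul_transpose (h : IsMoorePenrose A Ap) {ε : ℝ} (hε : 0 < ε) :
    (Aᵀ * A + ε • (1 : Matrix (Fin n) (Fin n) ℝ))⁻¹ * Aᵀ =
      Ap - ε • ((Aᵀ * A + ε • (1 : Matrix (Fin n) (Fin n) ℝ))⁻¹ * (Aᵀ * A)) * (Ap * Apᵀ * Ap) := by
  set M := Aᵀ * A + ε • (1 : Matrix (Fin n) (Fin n) ℝ)
  have hM : IsUnit M.det := (posDef_transpose_mul_self_add_smul_one A hε).det_pos.ne'.isUnit
  calc M⁻¹ * Aᵀ = M⁻¹ * (M * Ap - ε • Ap) := by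
        rw [Matrix.add_mul, Matrix.smul_mul, Matrix.one_mul, h.transpose_mul_self_mul,
          add_sub_cancel_right]
    _ = Ap - ε • (M⁻¹ * Ap) := by
        rw [Matrix.mul_sub, nonsing_inv_mul_cancel_left M Ap hM, Matrix.mul_smul]
    _ = _ := by
        rw [Matrix.smul_mul, Matrix.mul_assoc M⁻¹ (Aᵀ * A), ← h.eq_transpose_mul_self_mul]

end IsMoorePenrose


/-- Tikhonov regularization: (AᵀA + εI)⁻¹Aᵀ → A⁺ as ε → 0⁺, with AᵀA + εI invertible
for all ε > 0 (even when AᵀA is not invertible). -/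
theorem tikhonov_limit (m n : ℕ) (A : Matrix (Fin m) (Fin n) ℝ)
    (Ap : Matrix (Fin n) (Fin m) ℝ) (hAp : IsMoorePenrose A Ap) :
    (∀ ε : ℝ, 0 < ε → IsUnit (Aᵀ * A + ε • (1 : Matrix (Fin n) (Fin n) ℝ))) ∧
    Tendsto (fun ε : ℝ => (Aᵀ * A + ε • (1 : Matrix (Fin n) (Fin n) ℝ))⁻¹ * Aᵀ)
      (nhdsWithin 0 (Set.Ioi 0)) (nhds Ap) := by
  refine ⟨fun ε hε => (posDef_transpose_mul_self_add_smul_one A hε).isUnit, ?_⟩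
  have hcont : Continuous fun X : Matrix (Fin n) (Fin n) ℝ => Ap - X * (Ap * Apᵀ * Ap) :=
    continuous_const.sub (continuous_id.matrix_mul continuous_const)
  have hlim := (hcont.tendsto 0).comp
    (posSemidef_transpose_mul_self A).tendsto_smul_inv_add_smul_one_mul
  rw [Matrix.zero_mul, sub_zero] at hlim
  refine hlim.congr' ?_
  filter_upwards [self_mem_nhdsWithin] with ε hε
  exact (hAp.inv_add_smul_one_mul_transpose hε).symm
end

section
/- Let Q be an n×n real symmetric positive definite matrix and let C be an m×n real matrix with rank C = m. Then CQ⁻¹Cᵀ is invertible, and the image of the ellipsoid {x ∈ ℝⁿ | xᵀQx ≤ 1} under the linear map x ↦ Cx equals {y ∈ ℝᵐ | yᵀ(CQ⁻¹Cᵀ)⁻¹y ≤ 1}. -/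
/-!
Write `M = C Q⁻¹ Cᵀ`. Completing the square gives `2 vᵀx ≤ xᵀQx + vᵀQ⁻¹v` for every `v`;
with `v = Cᵀ M⁻¹ C x` this reads `(Cx)ᵀ M⁻¹ (Cx) ≤ xᵀQx`, so the image lies in the second
ellipsoid. Conversely `y` is the image of `Q⁻¹ Cᵀ M⁻¹ y`, whose `Q`-form is exactly `yᵀM⁻¹y`.
Full row rank of `C` makes `M` positive definite, hence invertible.
-/

open Matrix

namespace Matrix

theorem linearIndependent_row_of_rank_eq_card {R m n : Type*} [Field R] [Fintype m] [Fintype n]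
    {M : Matrix m n R} (h : M.rank = Fintype.card m) : LinearIndependent R M.row := by
  rw [linearIndependent_iff_card_eq_finrank_span, Set.finrank, ← rank_eq_finrank_span_row, h]

variable {ι κ : Type*} [Fintype ι] [Fintype κ]

theorem PosDef.mul_mul_transpose_of_rank_eq_card {A : Matrix ι ι ℝ} (hA : A.PosDef)
    {C : Matrix κ ι ℝ} (hC : C.rank = Fintype.card κ) : (C * A * Cᵀ).PosDef := by
  simpa only [conjTranspose_eq_transpose_of_trivial] using
    hA.mul_mul_conjTranspose_same
      (vecMul_injective_iff.mpr (linearIndependent_row_of_rank_eq_card hC))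

theorem dotProduct_mul_mul_transpose_mulVec {R : Type*} [CommSemiring R] (C : Matrix κ ι R)
    (A : Matrix ι ι R) (u : κ → R) :
    u ⬝ᵥ (C * A * Cᵀ) *ᵥ u = Cᵀ *ᵥ u ⬝ᵥ A *ᵥ Cᵀ *ᵥ u := by
  rw [← mulVec_mulVec, ← mulVec_mulVec, dotProduct_mulVec, ← mulVec_transpose]

theorem mulVec_nonsing_inv_mulVec {R : Type*} [CommRing R] [DecidableEq ι]
    {A : Matrix ι ι R} (hA : IsUnit A) (v : ι → R) : A *ᵥ A⁻¹ *ᵥ v = v := by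
  rw [mulVec_mulVec, mul_nonsing_inv _ ((isUnit_iff_isUnit_det A).mp hA), one_mulVec]

variable [DecidableEq ι] [DecidableEq κ]

theorem PosDef.two_mul_dotProduct_le {Q : Matrix ι ι ℝ} (hQ : Q.PosDef) (v x : ι → ℝ) :
    2 * (v ⬝ᵥ x) ≤ x ⬝ᵥ Q *ᵥ x + v ⬝ᵥ Q⁻¹ *ᵥ v := by
  have hQQinv := mulVec_nonsing_inv_mulVec hQ.isUnit v
  have hQsymm : Qᵀ = Q := (isHermitian_iff_isSymm.mp hQ.isHermitian).eq
  have hcross : Q⁻¹ *ᵥ v ⬝ᵥ Q *ᵥ x = v ⬝ᵥ x := by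
    rw [dotProduct_mulVec, ← mulVec_transpose, hQsymm, hQQinv]
  have hsq := hQ.posSemidef.dotProduct_mulVec_nonneg (x - Q⁻¹ *ᵥ v)
  rw [star_trivial, mulVec_sub, dotProduct_sub, sub_dotProduct, sub_dotProduct, hQQinv, hcross,
    dotProduct_comm x v, dotProduct_comm (Q⁻¹ *ᵥ v) v] at hsq
  linarith

theorem dotProduct_inv_mul_inv_mul_transpose_mulVec_le {Q : Matrix ι ι ℝ} (hQ : Q.PosDef)
    {C : Matrix κ ι ℝ} (hM : IsUnit (C * Q⁻¹ * Cᵀ)) (x : ι → ℝ) :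
    C *ᵥ x ⬝ᵥ (C * Q⁻¹ * Cᵀ)⁻¹ *ᵥ C *ᵥ x ≤ x ⬝ᵥ Q *ᵥ x := by
  set u := (C * Q⁻¹ * Cᵀ)⁻¹ *ᵥ C *ᵥ x
  have hMu : u ⬝ᵥ (C * Q⁻¹ * Cᵀ) *ᵥ u = u ⬝ᵥ C *ᵥ x := by
    rw [mulVec_nonsing_inv_mulVec hM]
  have h := hQ.two_mul_dotProduct_le (Cᵀ *ᵥ u) x
  rw [← dotProduct_mul_mul_transpose_mulVec, hMu, mulVec_transpose, ← dotProduct_mulVec] at h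
  rw [dotProduct_comm]
  linarith

theorem exists_mulVec_eq_and_dotProduct_mulVec_eq_inv {Q : Matrix ι ι ℝ} (hQ : IsUnit Q)
    {C : Matrix κ ι ℝ} (hM : IsUnit (C * Q⁻¹ * Cᵀ)) (y : κ → ℝ) :
    ∃ x, C *ᵥ x = y ∧ x ⬝ᵥ Q *ᵥ x = y ⬝ᵥ (C * Q⁻¹ * Cᵀ)⁻¹ *ᵥ y := by
  have hCx : C *ᵥ Q⁻¹ *ᵥ Cᵀ *ᵥ (C * Q⁻¹ * Cᵀ)⁻¹ *ᵥ y = y := by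
    simpa only [mulVec_mulVec, Matrix.mul_assoc] using mulVec_nonsing_inv_mulVec hM y
  refine ⟨_, hCx, ?_⟩
  rw [mulVec_nonsing_inv_mulVec hQ, dotProduct_mulVec, vecMul_transpose, hCx]

theorem mulVec_image_setOf_dotProduct_mulVec_le {Q : Matrix ι ι ℝ} (hQ : Q.PosDef)
    {C : Matrix κ ι ℝ} (hM : IsUnit (C * Q⁻¹ * Cᵀ)) (r : ℝ) :
    C.mulVec '' {x | x ⬝ᵥ Q *ᵥ x ≤ r} = {y | y ⬝ᵥ (C * Q⁻¹ * Cᵀ)⁻¹ *ᵥ y ≤ r} := by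
  ext y
  constructor
  · rintro ⟨x, hx, rfl⟩
    exact (dotProduct_inv_mul_inv_mul_transpose_mulVec_le hQ hM x).trans hx
  · intro hy
    obtain ⟨x, hCx, hxQx⟩ := exists_mulVec_eq_and_dotProduct_mulVec_eq_inv hQ.isUnit hM y
    exact ⟨x, hxQx.trans_le hy, hCx⟩

end Matrix

/-- The image of the ellipsoid {x | xᵀQx ≤ 1} (Q symmetric positive definite) under a
full-row-rank map y = Cx is the ellipsoid {y | yᵀ(CQ⁻¹Cᵀ)⁻¹y ≤ 1}. -/
theorem image_ellipsoid (n m : ℕ)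
    (Q : Matrix (Fin n) (Fin n) ℝ) (hQ : Q.PosDef)
    (C : Matrix (Fin m) (Fin n) ℝ) (hrankC : C.rank = m) :
    IsUnit (C * Q⁻¹ * Cᵀ) ∧
    C.mulVec '' {x : Fin n → ℝ | x ⬝ᵥ Q.mulVec x ≤ 1} =
      {y : Fin m → ℝ | y ⬝ᵥ ((C * Q⁻¹ * Cᵀ)⁻¹).mulVec y ≤ 1} := by
  have hM : IsUnit (C * Q⁻¹ * Cᵀ) :=
    (hQ.inv.mul_mul_transpose_of_rank_eq_card (by rwa [Fintype.card_fin])).isUnit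
  exact ⟨hM, mulVec_image_setOf_dotProduct_mulVec_le hQ hM 1⟩
end

section
/- Let A ∈ ℝ^{n×m}, B ∈ ℝ^{k×n}, and let C ∈ ℝ^{n×n} be symmetric. The matrix inequality AXB + (AXB)ᵀ + C ≺ 0 (the left-hand side is negative definite) has a solution X ∈ ℝ^{m×k} if and only if there exist reals μ₁, μ₂ such that μ₁·AAᵀ − C is positive definite and μ₂·BᵀB − C is positive definite. -/
/-!
Necessity: if `N = -(A X B + (A X B)ᵀ + C)` is positive definite, so is `N - t YᵀY` for `Y = X B`
and small `t > 0` (compactness of the unit sphere), and completing the square gives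
`t⁻¹ A Aᵀ - C = (N - t YᵀY) + t⁻¹ (Aᵀ + t Y)ᵀ (Aᵀ + t Y)`; the same with `Bᵀ` in place of `A`.

Sufficiency: take `τ ≥ 0`, `μ > 0` with `T = τ A Aᵀ - C` and `D = μ BᵀB - C` positive definite,
and `X = -τ Aᵀ T⁻¹ Bᵀ G` with `G = (B T⁻¹ Bᵀ + μ⁻¹)⁻¹`. For `w = G B x` and `y = T⁻¹ Bᵀ w`
the quadratic form of `-(A X B + (A X B)ᵀ + C)` at `x` equals
`(Bᵀw)ᵀ T⁻¹ (Bᵀw) + μ⁻¹ |w|² + (x - y)ᵀ D (x - y) + τ |Aᵀy|²`,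
a sum of nonnegative terms; if it vanishes then `w = 0`, hence `y = 0`, and `x - y = 0`.
-/

open Matrix

namespace Matrix

variable {n m k : Type*}

theorem isHermitian_neg_add_transpose_add {C : Matrix n n ℝ} (hC : Cᵀ = C) (Y : Matrix n n ℝ) :
    (-(Y + Yᵀ + C)).IsHermitian := by
  rw [IsHermitian, conjTranspose_eq_transpose_of_trivial, transpose_neg, transpose_add,
    transpose_add, transpose_transpose, hC, add_comm Yᵀ]

theorem PosDef.smul_sub_of_le {P C : Matrix n n ℝ} {μ ν : ℝ} (h : (μ • P - C).PosDef)
    (hP : P.PosSemidef) (hμν : μ ≤ ν) : (ν • P - C).PosDef := by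
  have hsplit : ν • P - C = (μ • P - C) + (ν - μ) • P := by
    rw [sub_smul]
    abel
  rw [hsplit]
  exact h.add_posSemidef (hP.smul (sub_nonneg.2 hμν))

variable [Fintype n] [Fintype m] [Fintype k]

theorem dotProduct_mulVec_eq_transpose (M : Matrix n m ℝ) (x : n → ℝ) (v : m → ℝ) :
    x ⬝ᵥ M *ᵥ v = (Mᵀ *ᵥ x) ⬝ᵥ v := by
  rw [dotProduct_mulVec, mulVec_transpose]

theorem posDef_of_forall_mem_sphere {M : Matrix n n ℝ} (hM : M.IsHermitian)
    (h : ∀ x ∈ Metric.sphere (0 : n → ℝ) 1, 0 < x ⬝ᵥ M *ᵥ x) : M.PosDef := by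
  refine posDef_iff_dotProduct_mulVec.mpr ⟨hM, fun x hx => ?_⟩
  have hnorm : 0 < ‖x‖ := norm_pos_iff.mpr hx
  have hunit := h (‖x‖⁻¹ • x) (by simp [norm_smul, hnorm.ne'])
  rw [mulVec_smul, smul_dotProduct, dotProduct_smul, smul_eq_mul, smul_eq_mul, ← mul_assoc]
    at hunit
  simpa using pos_of_mul_pos_right hunit (by positivity)

theorem PosDef.exists_pos_posDef_sub_smul {N P : Matrix n n ℝ} (hN : N.PosDef)
    (hP : P.IsHermitian) : ∃ t : ℝ, 0 < t ∧ (N - t • P).PosDef := by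
  have hS : IsCompact (Metric.sphere (0 : n → ℝ) 1) := isCompact_sphere 0 1
  have hq : ∀ M : Matrix n n ℝ, Continuous fun x : n → ℝ => x ⬝ᵥ M *ᵥ x := fun M => by
    fun_prop
  obtain ⟨ε, hε, hNε⟩ := hS.exists_forall_le' (hq N).continuousOn (a := 0) fun x hx => by
    simpa using hN.dotProduct_mulVec_pos (Metric.ne_of_mem_sphere hx one_ne_zero)
  obtain ⟨K, hK⟩ := hS.exists_bound_of_continuousOn (hq P).continuousOn
  refine ⟨ε / (|K| + 1), by positivity, posDef_of_forall_mem_sphere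
    (hN.isHermitian.sub (hP.smul (IsSelfAdjoint.all _))) fun x hx => ?_⟩
  have hPx : x ⬝ᵥ P *ᵥ x ≤ |K| := (le_abs_self _).trans ((hK x hx).trans (le_abs_self K))
  have hεK : ε / (|K| + 1) * |K| < ε := by
    rw [div_mul_eq_mul_div, div_lt_iff₀ (by positivity)]
    nlinarith [abs_nonneg K]
  rw [sub_mulVec, dotProduct_sub, smul_mulVec, dotProduct_smul, smul_eq_mul]
  nlinarith [hNε x hx, mul_le_mul_of_nonneg_left hPx (by positivity : 0 ≤ ε / (|K| + 1))]

theorem exists_posDef_smul_mul_transpose_sub {A : Matrix n m ℝ} {Y : Matrix m n ℝ}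
    {C : Matrix n n ℝ} (h : (-(A * Y + (A * Y)ᵀ + C)).PosDef) :
    ∃ μ : ℝ, (μ • (A * Aᵀ) - C).PosDef := by
  obtain ⟨t, ht, hsub⟩ := h.exists_pos_posDef_sub_smul
    (isHermitian_conjTranspose_mul_self Y : (Yᵀ * Y).IsHermitian)
  refine ⟨t⁻¹, ?_⟩
  have hsquare : t⁻¹ • (A * Aᵀ) - C
      = (-(A * Y + (A * Y)ᵀ + C) - t • (Yᵀ * Y)) + t⁻¹ • ((Aᵀ + t • Y)ᵀ * (Aᵀ + t • Y)) := by
    simp only [transpose_add, transpose_smul, transpose_transpose, transpose_mul, Matrix.add_mul,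
      Matrix.mul_add, Matrix.smul_mul, Matrix.mul_smul, smul_add, smul_smul,
      inv_mul_cancel₀ ht.ne', inv_mul_cancel_left₀ ht.ne', one_smul]
    abel
  rw [hsquare]
  exact hsub.add_posSemidef ((posSemidef_conjTranspose_mul_self _).smul (inv_nonneg.2 ht.le))

variable [DecidableEq n] [DecidableEq k]

theorem dotProduct_neg_mulVec_eq_sum_quadForms {A : Matrix n m ℝ} {B : Matrix k n ℝ}
    {C Φ : Matrix n n ℝ} {G : Matrix k k ℝ} {X : Matrix m k ℝ} {τ μ : ℝ} (hC : Cᵀ = C)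
    (hΦ : (τ • (A * Aᵀ) - C) * Φ = 1) (hG : (B * Φ * Bᵀ + μ⁻¹ • 1) * G = 1)
    (hX : X = -τ • (Aᵀ * Φ * Bᵀ * G)) {x y : n → ℝ} {w : k → ℝ} (hw : w = G *ᵥ B *ᵥ x)
    (hy : y = Φ *ᵥ Bᵀ *ᵥ w) :
    x ⬝ᵥ (-(A * X * B + (A * X * B)ᵀ + C)) *ᵥ x
      = (Bᵀ *ᵥ w) ⬝ᵥ Φ *ᵥ Bᵀ *ᵥ w + μ⁻¹ * (w ⬝ᵥ w)
        + (x - y) ⬝ᵥ (μ • (Bᵀ * B) - C) *ᵥ (x - y) + τ * ((Aᵀ *ᵥ y) ⬝ᵥ (Aᵀ *ᵥ y)) := by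
  have hXB : (A * X * B) *ᵥ x = -τ • (A *ᵥ Aᵀ *ᵥ y) := by
    simp only [hX, hy, hw, mulVec_mulVec, neg_smul, Matrix.neg_mul, Matrix.mul_neg,
      Matrix.smul_mul, Matrix.mul_smul, Matrix.mul_assoc, neg_mulVec, smul_mulVec]
  have hTy : τ • (A *ᵥ Aᵀ *ᵥ y) - C *ᵥ y = Bᵀ *ᵥ w := calc
    _ = ((τ • (A * Aᵀ) - C) * Φ) *ᵥ Bᵀ *ᵥ w := by
      simp only [hy, Matrix.sub_mul, Matrix.smul_mul, sub_mulVec, smul_mulVec, mulVec_mulVec,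
        Matrix.mul_assoc]
    _ = Bᵀ *ᵥ w := by rw [hΦ, one_mulVec]
  have hBx : B *ᵥ x = B *ᵥ y + μ⁻¹ • w := calc
    _ = ((B * Φ * Bᵀ + μ⁻¹ • 1) * G) *ᵥ B *ᵥ x := by rw [hG, one_mulVec]
    _ = B *ᵥ y + μ⁻¹ • w := by
      simp only [hy, hw, Matrix.add_mul, Matrix.smul_mul, Matrix.one_mul, add_mulVec, smul_mulVec,
        mulVec_mulVec, Matrix.mul_assoc]
  have hBz : B *ᵥ (x - y) = μ⁻¹ • w := by rw [mulVec_sub, hBx, add_sub_cancel_left]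
  have hLHS : x ⬝ᵥ (-(A * X * B + (A * X * B)ᵀ + C)) *ᵥ x
      = 2 * τ * ((Aᵀ *ᵥ x) ⬝ᵥ (Aᵀ *ᵥ y)) - x ⬝ᵥ C *ᵥ x := by
    rw [neg_mulVec, add_mulVec, add_mulVec, dotProduct_neg, dotProduct_add, dotProduct_add,
      dotProduct_mulVec x (A * X * B)ᵀ, vecMul_transpose, dotProduct_comm _ x, hXB,
      dotProduct_smul, dotProduct_mulVec_eq_transpose A, smul_eq_mul]
    ring
  have hTx : τ * ((Aᵀ *ᵥ x) ⬝ᵥ (Aᵀ *ᵥ y)) - x ⬝ᵥ C *ᵥ y = (B *ᵥ x) ⬝ᵥ w := by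
    simpa only [dotProduct_sub, dotProduct_smul, smul_eq_mul, dotProduct_mulVec_eq_transpose A,
      dotProduct_mulVec_eq_transpose Bᵀ, transpose_transpose] using congrArg (x ⬝ᵥ ·) hTy
  have hTy' : τ * ((Aᵀ *ᵥ y) ⬝ᵥ (Aᵀ *ᵥ y)) - y ⬝ᵥ C *ᵥ y = y ⬝ᵥ Bᵀ *ᵥ w := by
    simpa only [dotProduct_sub, dotProduct_smul, smul_eq_mul, dotProduct_mulVec_eq_transpose A]
      using congrArg (y ⬝ᵥ ·) hTy
  have hBxw : (B *ᵥ x) ⬝ᵥ w = y ⬝ᵥ Bᵀ *ᵥ w + μ⁻¹ * (w ⬝ᵥ w) := by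
    rw [hBx, add_dotProduct, smul_dotProduct, smul_eq_mul, dotProduct_mulVec_eq_transpose Bᵀ,
      transpose_transpose]
  have hD : (x - y) ⬝ᵥ (μ • (Bᵀ * B) - C) *ᵥ (x - y)
      = μ⁻¹ * (w ⬝ᵥ w) - (x - y) ⬝ᵥ C *ᵥ (x - y) := by
    rw [sub_mulVec, dotProduct_sub, smul_mulVec, dotProduct_smul, ← mulVec_mulVec,
      dotProduct_mulVec_eq_transpose Bᵀ, transpose_transpose, hBz, smul_dotProduct,
      dotProduct_smul, smul_eq_mul, smul_eq_mul, smul_eq_mul, ← mul_assoc, ← mul_assoc,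
      show μ * μ⁻¹ * μ⁻¹ = μ⁻¹ by simpa using inv_mul_mul_self μ⁻¹]
  have hCz : (x - y) ⬝ᵥ C *ᵥ (x - y) = x ⬝ᵥ C *ᵥ x - 2 * (x ⬝ᵥ C *ᵥ y) + y ⬝ᵥ C *ᵥ y := by
    have hsymm : y ⬝ᵥ C *ᵥ x = x ⬝ᵥ C *ᵥ y := by
      rw [dotProduct_mulVec_eq_transpose, hC, dotProduct_comm]
    rw [mulVec_sub, dotProduct_sub, sub_dotProduct, sub_dotProduct, hsymm]
    ring
  rw [hLHS, hD, hCz, ← hy, dotProduct_comm (Bᵀ *ᵥ w) y]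
  linear_combination 2 * hTx - hTy' + 2 * hBxw

theorem exists_posDef_neg_of_posDef_smul_sub {A : Matrix n m ℝ} {B : Matrix k n ℝ}
    {C : Matrix n n ℝ} {τ μ : ℝ} (hC : Cᵀ = C) (hτ : 0 ≤ τ) (hT : (τ • (A * Aᵀ) - C).PosDef)
    (hμ : 0 < μ) (hD : (μ • (Bᵀ * B) - C).PosDef) :
    ∃ X : Matrix m k ℝ, (-(A * X * B + (A * X * B)ᵀ + C)).PosDef := by
  set Φ := (τ • (A * Aᵀ) - C)⁻¹
  have hΦ : Φ.PosDef := hT.inv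
  -- `B Φ Bᵀ` may be singular; the shift by `μ⁻¹` stands in for its pseudo-inverse.
  have hGm : (B * Φ * Bᵀ + μ⁻¹ • 1).PosDef :=
    PosDef.posSemidef_add (hΦ.posSemidef.mul_mul_conjTranspose_same B)
      (PosDef.one.smul (inv_pos.2 hμ))
  set G := (B * Φ * Bᵀ + μ⁻¹ • 1)⁻¹
  refine ⟨-τ • (Aᵀ * Φ * Bᵀ * G), posDef_iff_dotProduct_mulVec.mpr
    ⟨isHermitian_neg_add_transpose_add hC _, fun x hx => ?_⟩⟩
  set w := G *ᵥ B *ᵥ x with hw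
  set y := Φ *ᵥ Bᵀ *ᵥ w with hy
  rw [star_trivial, dotProduct_neg_mulVec_eq_sum_quadForms (Φ := Φ) (G := G) hC
    (mul_nonsing_inv _ hT.det_pos.ne'.isUnit) (mul_nonsing_inv _ hGm.det_pos.ne'.isUnit) rfl
    hw hy]
  have hΦw : 0 ≤ (Bᵀ *ᵥ w) ⬝ᵥ Φ *ᵥ Bᵀ *ᵥ w := by
    simpa using hΦ.posSemidef.dotProduct_mulVec_nonneg (Bᵀ *ᵥ w)
  have hDz : 0 ≤ (x - y) ⬝ᵥ (μ • (Bᵀ * B) - C) *ᵥ (x - y) := by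
    simpa using hD.posSemidef.dotProduct_mulVec_nonneg (x - y)
  have hAy : 0 ≤ τ * ((Aᵀ *ᵥ y) ⬝ᵥ (Aᵀ *ᵥ y)) := by
    simpa using mul_nonneg hτ (dotProduct_star_self_nonneg (Aᵀ *ᵥ y))
  have hWw : 0 ≤ μ⁻¹ * (w ⬝ᵥ w) :=
    mul_nonneg (inv_nonneg.2 hμ.le) (by simpa using dotProduct_star_self_nonneg w)
  rcases eq_or_ne w 0 with hw0 | hw0
  · have hDz' : 0 < (x - y) ⬝ᵥ (μ • (Bᵀ * B) - C) *ᵥ (x - y) := by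
      simpa [hy, hw0] using hD.dotProduct_mulVec_pos hx
    linarith
  · have hWw' : 0 < μ⁻¹ * (w ⬝ᵥ w) :=
      mul_pos (inv_pos.2 hμ) (by simpa using dotProduct_star_self_pos_iff.2 hw0)
    linarith

end Matrix

/-- Lemma 5: the matrix inequality AXB + (AXB)ᵀ + C ≺ 0 is solvable in X if and only if
there exist μ₁, μ₂ with C ≺ μ₁AAᵀ and C ≺ μ₂BᵀB. -/
theorem lemma5 (n m k : ℕ)
    (A : Matrix (Fin n) (Fin m) ℝ) (B : Matrix (Fin k) (Fin n) ℝ)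
    (C : Matrix (Fin n) (Fin n) ℝ) (hC : Cᵀ = C) :
    (∃ X : Matrix (Fin m) (Fin k) ℝ,
        (-(A * X * B + (A * X * B)ᵀ + C)).PosDef) ↔
      ∃ μ₁ μ₂ : ℝ, (μ₁ • (A * Aᵀ) - C).PosDef ∧ (μ₂ • (Bᵀ * B) - C).PosDef := by
  constructor
  · rintro ⟨X, hX⟩
    obtain ⟨μ₁, h₁⟩ := exists_posDef_smul_mul_transpose_sub (Y := X * B)
      (by rwa [← Matrix.mul_assoc])
    obtain ⟨μ₂, h₂⟩ := exists_posDef_smul_mul_transpose_sub (A := Bᵀ) (Y := (A * X)ᵀ)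
      (by rwa [← transpose_mul, transpose_transpose, add_comm (A * X * B)ᵀ])
    exact ⟨μ₁, μ₂, h₁, by rwa [transpose_transpose] at h₂⟩
  · rintro ⟨μ₁, μ₂, h₁, h₂⟩
    exact exists_posDef_neg_of_posDef_smul_sub hC (le_max_right μ₁ 0)
      (h₁.smul_sub_of_le (posSemidef_self_mul_conjTranspose A) (le_max_left _ _))
      (lt_max_of_lt_right one_pos)
      (h₂.smul_sub_of_le (posSemidef_conjTranspose_mul_self B) (le_max_left μ₂ 1))
end
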